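/- arXiv:2107.11916 — 2 statements merged into one kernel-verified Lean document; each statement's English description precedes it below -/
import Mathlib

section
/- Let A be a K-subalgebra of K[x] of codimension n > 1 with spectrum Sp(A) = {α_1, ..., α_s}. Then there exist an integer N > 1 and n K-linear maps L_1, ..., L_n : K[x] → K, each of the form L(f) = Σ_{i=0}^{N−1} Σ_{j=1}^{s} c_{ij} · f^(i)(α_j) for some constants c_{ij} ∈ K (where f^(0) = f), such that for every f ∈ K[x]: f ∈ A if and only if L_k(f) = 0 for all k = 1, ..., n. -/
/-!
The conductor of `A`, the largest ideal of `K[x]` contained in `A`, is nonzero: multiplication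
gives a linear map from the infinite-dimensional `A` to the finite-dimensional `End_K(K[x]/A)`,
and its kernel lies in the conductor. Away from the spectrum, every polynomial `q` has a multiple
`q v ∈ A` with `v(β) ≠ 0` (true for linear factors, and multiplicative), which lets one divide a
conductor element by `x - β` whenever `β ∉ Sp(A)`. So some `c ≠ 0` in the conductor has all its
roots in `Sp(A)`; then `c ∣ f`, hence `f ∈ A`, as soon as `f^(i)(α_j) = 0` for all `j` and
`i < N := max (deg c) 2`. Thus `A` contains the kernel of `f ↦ (f^(i)(α_j))_{i,j}`, and a
subspace of codimension `n` containing the kernel of a linear map is cut out by `n` functionals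
of that map.
-/

open Polynomial

/-- The spectrum of a subalgebra `A` of `K[x]`. -/
def subalgebraSpectrum {K : Type*} [Field K] (A : Subalgebra K (Polynomial K)) : Set K :=
  {α | (∀ f ∈ A, (Polynomial.derivative f).eval α = 0) ∨
    ∃ β : K, β ≠ α ∧ ∀ f ∈ A, f.eval α = f.eval β}

section LinearAlgebra

variable {K V E F : Type*} [Field K] [AddCommGroup V] [Module K V] [AddCommGroup E] [Module K E]
  [AddCommGroup F] [Module K F]

theorem LinearMap.exists_comp_eq_of_ker_le {T : V →ₗ[K] E} {g : V →ₗ[K] F}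
    (h : LinearMap.ker T ≤ LinearMap.ker g) : ∃ ψ : E →ₗ[K] F, ψ ∘ₗ T = g := by
  obtain ⟨ψ, hψ⟩ := LinearMap.exists_extend
    ((LinearMap.ker T).liftQ g h ∘ₗ T.quotKerEquivRange.symm.toLinearMap)
  refine ⟨ψ, LinearMap.ext fun v => ?_⟩
  simpa using LinearMap.congr_fun hψ ⟨T v, LinearMap.mem_range_self T v⟩

theorem Submodule.exists_coeffs_mem_iff_of_ker_le {ι : Type*} [Fintype ι]
    {W : Submodule K V} [FiniteDimensional K (V ⧸ W)] {n : ℕ} (hW : Module.finrank K (V ⧸ W) = n)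
    {T : V →ₗ[K] ι → K} (h : LinearMap.ker T ≤ W) :
    ∃ c : Fin n → ι → K, ∀ v, v ∈ W ↔ ∀ k, ∑ i, c k i * T v i = 0 := by
  classical
  obtain ⟨ψ, hψ⟩ := LinearMap.exists_comp_eq_of_ker_le (T := T) (g := W.mkQ) (by rwa [W.ker_mkQ])
  let b := Module.finBasisOfFinrankEq K (V ⧸ W) hW
  refine ⟨fun k i => b.coord k (ψ (Pi.single i 1)), fun v => ?_⟩
  have hsum : ∀ k, ∑ i, b.coord k (ψ (Pi.single i 1)) * T v i = b.coord k (W.mkQ v) := by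
    intro k
    conv_rhs => rw [← hψ, LinearMap.comp_apply, ← Finset.univ_sum_single (T v)]
    rw [map_sum, map_sum]
    refine Finset.sum_congr rfl fun i _ => ?_
    rw [mul_comm, ← smul_eq_mul, ← map_smul, ← map_smul, ← Pi.single_smul, smul_eq_mul, mul_one]
  simp only [hsum, b.forall_coord_eq_zero_iff, Submodule.mkQ_apply, Submodule.Quotient.mk_eq_zero]

end LinearAlgebra

namespace Polynomial

theorem X_sub_C_pow_dvd_iff_iterate_derivative_eval {R : Type*} [CommRing R] [IsDomain R]
    [CharZero R] {p : R[X]} {a : R} {N : ℕ} :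
    (X - C a) ^ N ∣ p ↔ ∀ i < N, (derivative^[i] p).eval a = 0 := by
  rcases eq_or_ne p 0 with rfl | hp
  · simp
  cases N with
  | zero => simp
  | succ N =>
    rw [← le_rootMultiplicity_iff hp, Nat.succ_le_iff,
      lt_rootMultiplicity_iff_isRoot_iterate_derivative hp]
    simp [IsRoot]

theorem dvd_of_forall_isRoot_X_sub_C_pow_natDegree_dvd {K : Type*} [Field K] [IsAlgClosed K]
    {c f : K[X]} (hc : c ≠ 0) (h : ∀ γ, c.IsRoot γ → (X - C γ) ^ c.natDegree ∣ f) : c ∣ f := by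
  classical
  rcases eq_or_ne f 0 with rfl | hf
  · exact dvd_zero c
  rw [IsAlgClosed.dvd_iff_roots_le_roots hc hf, Multiset.le_iff_count]
  intro γ
  by_cases hγ : c.IsRoot γ
  · calc c.roots.count γ ≤ c.natDegree := (Multiset.count_le_card _ _).trans (card_roots' c)
      _ ≤ f.roots.count γ := by rw [count_roots]; exact (le_rootMultiplicity_iff hf).2 (h γ hγ)
  · rw [count_roots, rootMultiplicity_eq_zero hγ]
    exact Nat.zero_le _

end Polynomial

namespace Subalgebra

def conductor {R S : Type*} [CommSemiring R] [CommSemiring S] [Algebra R S]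
    (A : Subalgebra R S) : Ideal S where
  carrier := {a | ∀ b, a * b ∈ A}
  zero_mem' b := by simp
  add_mem' ha hb c := by simpa only [add_mul] using A.add_mem (ha c) (hb c)
  smul_mem' c a ha b := by simpa only [smul_eq_mul, mul_left_comm, mul_assoc] using ha (c * b)

theorem conductor_ne_bot {K S : Type*} [Field K] [CommRing S] [Algebra K S]
    (hS : ¬ Module.Finite K S) (A : Subalgebra K S)
    [FiniteDimensional K (S ⧸ toSubmodule A)] : A.conductor ≠ ⊥ := by
  intro hbot
  let p := toSubmodule A
  let Φ : A →ₗ[K] Module.End K (S ⧸ p) :=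
    p.mapQLinear p ∘ₗ (LinearMap.mul K S ∘ₗ A.val.toLinearMap).codRestrict (p.compatibleMaps p)
      fun a b hb => A.mul_mem a.2 hb
  have hΦ_mkQ : ∀ (a : A) (b : S), Φ a (p.mkQ b) = p.mkQ (a * b) := fun _ _ => rfl
  have hΦ : Function.Injective Φ := by
    rw [← LinearMap.ker_eq_bot, eq_bot_iff]
    intro a ha
    have hmem : (a : S) ∈ A.conductor := fun b => by
      have hab := LinearMap.congr_fun ha (p.mkQ b)
      rwa [hΦ_mkQ, LinearMap.zero_apply, Submodule.mkQ_apply, Submodule.Quotient.mk_eq_zero] at hab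
    rw [hbot, Ideal.mem_bot] at hmem
    simpa [Submodule.mem_bot] using hmem
  have := Module.Finite.of_injective Φ hΦ
  exact hS (Module.Finite.of_submodule_quotient p)

end Subalgebra

section Spectrum

variable {K : Type*} [Field K] {A : Subalgebra K K[X]} {β : K}

theorem exists_X_sub_C_mul_mem_of_notMem_subalgebraSpectrum (hβ : β ∉ subalgebraSpectrum A)
    (γ : K) : ∃ v : K[X], v.eval β ≠ 0 ∧ (X - C γ) * v ∈ A := by
  have hmem : ∀ g ∈ A, (X - C γ) * (g /ₘ (X - C γ)) ∈ A := fun g hg => by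
    rw [X_sub_C_mul_divByMonic_eq_sub_modByMonic, modByMonic_X_sub_C_eq_C_eval]
    exact A.sub_mem hg (A.algebraMap_mem _)
  simp only [subalgebraSpectrum, Set.mem_ofPred_eq, not_or, not_forall, not_exists, not_and] at hβ
  obtain ⟨⟨f, hfA, hf⟩, hsep⟩ := hβ
  -- The difference quotient of `g` at `γ` takes the value `g'(β)` at `β = γ`, and
  -- `(g(β) - g(γ)) / (β - γ)` at `β ≠ γ`.
  rcases eq_or_ne γ β with rfl | hγβ
  · refine ⟨f /ₘ (X - C γ), ?_, hmem f hfA⟩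
    have := congrArg (eval γ) (divByMonic_add_X_sub_C_mul_derivative_divByMonic_eq_derivative f γ)
    simp only [eval_add, eval_mul, eval_sub, eval_X, eval_C, sub_self, zero_mul, add_zero] at this
    rwa [this]
  · obtain ⟨g, hgA, hg⟩ := hsep γ hγβ
    refine ⟨g /ₘ (X - C γ), fun h => hg ?_, hmem g hgA⟩
    have := congrArg (eval β) (X_sub_C_mul_divByMonic_eq_sub_modByMonic g γ)
    simp only [eval_mul, eval_sub, eval_X, eval_C, h, mul_zero, modByMonic_X_sub_C_eq_C_eval] at this
    linear_combination -this

theorem exists_mul_mem_of_notMem_subalgebraSpectrum [IsAlgClosed K]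
    (hβ : β ∉ subalgebraSpectrum A) (q : K[X]) : ∃ v : K[X], v.eval β ≠ 0 ∧ q * v ∈ A := by
  let P : K[X] → Prop := fun q => ∃ v : K[X], v.eval β ≠ 0 ∧ q * v ∈ A
  have hmul : ∀ q r, P q → P r → P (q * r) := fun q r ⟨v, hv, hqv⟩ ⟨w, hw, hrw⟩ =>
    ⟨v * w, by simp [hv, hw], by simpa only [mul_mul_mul_comm] using A.mul_mem hqv hrw⟩
  have hC : ∀ a, P (C a) := fun a => ⟨1, by simp, by simpa using A.algebraMap_mem a⟩
  rw [(IsAlgClosed.splits q).eq_prod_roots]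
  refine hmul _ _ (hC _) (Multiset.prod_induction P _ hmul (by simpa using hC 1) ?_)
  simp only [Multiset.mem_map]
  rintro _ ⟨γ, -, rfl⟩
  exact exists_X_sub_C_mul_mem_of_notMem_subalgebraSpectrum hβ γ

theorem mem_conductor_of_X_sub_C_mul_mem_conductor {q v : K[X]}
    (hc : (X - C β) * q ∈ A.conductor) (hv : v.eval β ≠ 0) (hqv : q * v ∈ A) :
    q ∈ A.conductor := by
  intro h
  obtain ⟨t, ht⟩ : X - C β ∣ h - C (h.eval β / v.eval β) * v :=
    dvd_iff_isRoot.mpr (by simp [hv])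
  have hqh : q * h = C (h.eval β / v.eval β) * (q * v) + (X - C β) * q * t := by
    linear_combination q * ht
  rw [hqh]
  exact A.add_mem (A.mul_mem (A.algebraMap_mem _) hqv) (hc t)

theorem exists_mem_conductor_isRoot_mem_subalgebraSpectrum [IsAlgClosed K]
    (hA : A.conductor ≠ ⊥) :
    ∃ c ∈ A.conductor, c ≠ 0 ∧ ∀ β, c.IsRoot β → β ∈ subalgebraSpectrum A := by
  obtain ⟨c, hcA, hc0⟩ := Submodule.exists_mem_ne_zero_of_ne_bot hA
  induction hd : c.natDegree using Nat.strong_induction_on generalizing c with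
  | _ d ih =>
  by_cases hroots : ∀ β, c.IsRoot β → β ∈ subalgebraSpectrum A
  · exact ⟨c, hcA, hc0, hroots⟩
  push Not at hroots
  obtain ⟨β, hβ, hβA⟩ := hroots
  obtain ⟨q, rfl⟩ : X - C β ∣ c := dvd_iff_isRoot.mpr hβ
  have hq0 : q ≠ 0 := right_ne_zero_of_mul hc0
  obtain ⟨v, hv, hqv⟩ := exists_mul_mem_of_notMem_subalgebraSpectrum hβA q
  refine ih _ ?_ _ (mem_conductor_of_X_sub_C_mul_mem_conductor hcA hv hqv) hq0 rfl
  rw [← hd, natDegree_mul (X_sub_C_ne_zero β) hq0, natDegree_X_sub_C]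
  omega

end Spectrum

theorem subalgebra_described_by_derivative_conditions_general
    {K : Type*} [Field K] [IsAlgClosed K] [CharZero K]
    (A : Subalgebra K (Polynomial K)) (n : ℕ)
    (hfin : FiniteDimensional K (Polynomial K ⧸ Subalgebra.toSubmodule A))
    (hcodim : Module.finrank K (Polynomial K ⧸ Subalgebra.toSubmodule A) = n)
    (s : ℕ) (α : Fin s → K)
    (hSp : subalgebraSpectrum A = Set.range α) :
    ∃ N : ℕ, 1 < N ∧ ∃ c : Fin n → Fin N → Fin s → K,
      ∀ f : Polynomial K, f ∈ A ↔
        ∀ k : Fin n,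
          ∑ i : Fin N, ∑ j : Fin s,
            c k i j * ((Polynomial.derivative)^[(i : ℕ)] f).eval (α j) = 0 := by
  obtain ⟨c, hcA, hc0, hcSp⟩ :=
    exists_mem_conductor_isRoot_mem_subalgebraSpectrum (A.conductor_ne_bot not_finite)
  let N := max c.natDegree 2
  let T : K[X] →ₗ[K] Fin N × Fin s → K :=
    LinearMap.pi fun p => (leval (α p.2)).comp (derivative ^ (p.1 : ℕ))
  have hT : ∀ f p, T f p = (derivative^[p.1] f).eval (α p.2) := fun f p => by
    simp [T, Module.End.pow_apply]
  have hker : LinearMap.ker T ≤ Subalgebra.toSubmodule A := by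
    intro f hf
    obtain ⟨t, rfl⟩ := dvd_of_forall_isRoot_X_sub_C_pow_natDegree_dvd (f := f) hc0 fun γ hγ => by
      obtain ⟨j, rfl⟩ : γ ∈ Set.range α := hSp ▸ hcSp γ hγ
      refine (pow_dvd_pow _ (le_max_left _ 2)).trans
        (X_sub_C_pow_dvd_iff_iterate_derivative_eval.mpr fun i hi => ?_)
      simpa [hT] using congr_fun hf (⟨i, hi⟩, j)
    exact hcA t
  obtain ⟨L, hL⟩ := Submodule.exists_coeffs_mem_iff_of_ker_le hcodim hker
  refine ⟨N, lt_max_of_lt_right one_lt_two, fun k i j => L k (i, j), fun f => ?_⟩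
  rw [← Subalgebra.mem_toSubmodule, hL f]
  simp only [Fintype.sum_prod_type, hT]

theorem subalgebra_described_by_derivative_conditions
    {K : Type*} [Field K] [IsAlgClosed K] [CharZero K]
    (A : Subalgebra K (Polynomial K)) (n : ℕ) (hn : 1 < n)
    (hfin : FiniteDimensional K (Polynomial K ⧸ Subalgebra.toSubmodule A))
    (hcodim : Module.finrank K (Polynomial K ⧸ Subalgebra.toSubmodule A) = n)
    (s : ℕ) (α : Fin s → K) (hinj : Function.Injective α)
    (hSp : subalgebraSpectrum A = Set.range α) :
    ∃ N : ℕ, 1 < N ∧ ∃ c : Fin n → Fin N → Fin s → K,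
      ∀ f : Polynomial K, f ∈ A ↔
        ∀ k : Fin n,
          ∑ i : Fin N, ∑ j : Fin s,
            c k i j * ((Polynomial.derivative)^[(i : ℕ)] f).eval (α j) = 0 :=
  subalgebra_described_by_derivative_conditions_general A n hfin hcodim s α hSp
end

section
/- Let p, q ∈ K[x] be monic polynomials whose degrees are relatively prime, and let a ∈ K[x] be a polynomial of degree at least two that divides both p and q. Then every root of a is a root of the characteristic polynomial χ_{p,q}; that is, for every α ∈ K with a(α) = 0 one has χ_{p,q}(α) = 0. -/
open Polynomial

/-- The resultant of two polynomials, defined as the determinant of their Sylvester matrix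
(with coefficients listed in ascending order of degree). -/
noncomputable def resultant {R : Type*} [CommRing R] (f g : Polynomial R) : R :=
  Matrix.det (Matrix.of fun (i j : Fin (g.natDegree + f.natDegree)) =>
    if (i : ℕ) < g.natDegree then
      (if (i : ℕ) ≤ (j : ℕ) then f.coeff ((j : ℕ) - (i : ℕ)) else 0)
    else
      (if (i : ℕ) - g.natDegree ≤ (j : ℕ) then g.coeff ((j : ℕ) - ((i : ℕ) - g.natDegree))
       else 0))

/-- For `p ∈ K[x]`, the polynomial `P(x,y) = (p(x) − p(y))/(x − y)`, viewed as a polynomial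
in `y` with coefficients in `K[x]` (the outer variable is `y`). -/
noncomputable def divDiff {K : Type*} [Field K] (p : Polynomial K) :
    Polynomial (Polynomial K) :=
  (p.map (Polynomial.C : K →+* Polynomial K) - Polynomial.C p) /ₘ
    (Polynomial.X - Polynomial.C Polynomial.X)

/-- The characteristic polynomial `χ_{p,q} = Res_y(P(x,y), Q(x,y))` of the pair `p, q`. -/
noncomputable def charPoly {K : Type*} [Field K] (p q : Polynomial K) : Polynomial K :=
  _root_.resultant (divDiff p) (divDiff q)

/-! Substituting a root `α` of `p` for `x` turns `P(x, y)` into `p(y) / (y - α)`, and since the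
divided differences of monic polynomials are monic in `y`, this substitution commutes with the
resultant. Writing `a = (y - α) b`, the factor `b` has positive degree and divides both
`p(y) / (y - α)` and `q(y) / (y - α)`, so their resultant vanishes. -/

theorem ite_coeff_sub_eq_ite_mem_Icc {R : Type*} [Semiring R] (f : R[X]) (i j : ℕ) :
    (if i ≤ j then f.coeff (j - i) else 0) =
      if j ∈ Set.Icc i (i + f.natDegree) then f.coeff (j - i) else 0 := by
  by_cases hij : i ≤ j
  · by_cases hdeg : j ≤ i + f.natDegree
    · simp [hij, hdeg]
    · simp [hij, hdeg, coeff_eq_zero_of_natDegree_lt (by omega : f.natDegree < j - i)]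
  · simp [hij]

/-- The Sylvester matrix of `resultant f g` is the transpose of Mathlib's `sylvester g f`. -/
theorem resultant_eq_resultant_swap {R : Type*} [CommRing R] (f g : R[X]) :
    _root_.resultant f g = Polynomial.resultant g f := by
  rw [Polynomial.resultant, ← Matrix.det_transpose]
  refine congrArg Matrix.det (Matrix.ext fun i j ↦ ?_)
  induction i using Fin.addCases with
  | left i =>
    simp only [Matrix.of_apply, Matrix.transpose_apply, sylvester, Fin.addCases_left,
      Fin.val_castAdd, i.is_lt, if_true, ite_coeff_sub_eq_ite_mem_Icc]
  | right i =>
    simp only [Matrix.of_apply, Matrix.transpose_apply, sylvester, Fin.addCases_right,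
      Fin.val_natAdd, add_tsub_cancel_left, ite_coeff_sub_eq_ite_mem_Icc,
      (Nat.le_add_right _ _).not_gt, if_false]

theorem resultant_eq_zero_of_dvd {K : Type*} [Field K] {f g b : K[X]} (hf : f ≠ 0)
    (hb : 0 < b.natDegree) (hbf : b ∣ f) (hbg : b ∣ g) : Polynomial.resultant f g = 0 :=
  resultant_eq_zero_iff.mpr ⟨.inl hf, fun hfg ↦
    (natDegree_eq_zero_of_isUnit (hfg.isUnit_of_dvd' hbf hbg)).not_gt hb⟩

section divDiff

variable {K : Type*} [Field K] {p : K[X]}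

theorem X_sub_C_X_mul_divDiff (p : K[X]) :
    (X - C X) * divDiff p = p.map C - C p := by
  rw [divDiff, mul_divByMonic_eq_iff_isRoot]
  simp [eval_map, eval₂_C_X]

theorem monic_divDiff (hp : p.Monic) (hdeg : 0 < p.natDegree) : (divDiff p).Monic := by
  refine (monic_X_sub_C X).of_mul_monic_left ?_
  rw [X_sub_C_X_mul_divDiff]
  refine (hp.map C).sub_of_left ?_
  rw [degree_C hp.ne_zero, degree_map_eq_of_injective C_injective p]
  exact natDegree_pos_iff_degree_pos.mp hdeg

theorem X_sub_C_mul_map_divDiff {α : K} (hα : p.eval α = 0) :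
    (X - C α) * (divDiff p).map (evalRingHom α) = p := by
  have := congrArg (map (evalRingHom α)) (X_sub_C_X_mul_divDiff p)
  rwa [Polynomial.map_mul, Polynomial.map_sub, Polynomial.map_sub, map_X, map_C, map_C,
    coe_evalRingHom, eval_X, hα, C_0, sub_zero, Polynomial.map_map,
    show (evalRingHom α).comp C = RingHom.id K from RingHom.ext fun _ ↦ eval_C, map_id] at this

theorem eval_charPoly {q : K[X]} (hp : p.Monic) (hq : q.Monic) (hp0 : 0 < p.natDegree)
    (hq0 : 0 < q.natDegree) (α : K) :
    (charPoly p q).eval α = Polynomial.resultant ((divDiff q).map (evalRingHom α))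
      ((divDiff p).map (evalRingHom α)) := by
  rw [charPoly, resultant_eq_resultant_swap, ← coe_evalRingHom, ← resultant_map_map,
    (monic_divDiff hq hq0).natDegree_map, (monic_divDiff hp hp0).natDegree_map]

theorem dvd_map_divDiff_of_mul_dvd {b : K[X]} {α : K} (h : (X - C α) * b ∣ p) :
    b ∣ (divDiff p).map (evalRingHom α) := by
  have hα : p.eval α = 0 := eval_eq_zero_of_dvd_of_eval_eq_zero (dvd_of_mul_right_dvd h) (by simp)
  rw [← X_sub_C_mul_map_divDiff hα] at h
  exact (mul_dvd_mul_iff_left (X_sub_C_ne_zero α)).mp h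

end divDiff

theorem roots_of_common_divisor_are_roots_of_charPoly_general
    {K : Type*} [Field K]
    (p q a : Polynomial K) (hp : p.Monic) (hq : q.Monic)
    (ha : 2 ≤ a.natDegree) (hap : a ∣ p) (haq : a ∣ q) :
    ∀ α : K, a.eval α = 0 → (charPoly p q).eval α = 0 := by
  intro α hα
  obtain ⟨b, rfl⟩ := dvd_iff_isRoot.mpr hα
  have hb : 0 < b.natDegree := by
    have := ha.trans natDegree_mul_le
    rw [natDegree_X_sub_C] at this
    omega
  have hdeg {r : K[X]} (hr : r.Monic) (h : (X - C α) * b ∣ r) : 0 < r.natDegree := by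
    have := natDegree_le_of_dvd h hr.ne_zero
    omega
  rw [eval_charPoly hp hq (hdeg hp hap) (hdeg hq haq)]
  exact resultant_eq_zero_of_dvd ((monic_divDiff hq (hdeg hq haq)).map _).ne_zero hb
    (dvd_map_divDiff_of_mul_dvd haq) (dvd_map_divDiff_of_mul_dvd hap)

theorem roots_of_common_divisor_are_roots_of_charPoly
    {K : Type*} [Field K] [IsAlgClosed K] [CharZero K]
    (p q a : Polynomial K) (hp : p.Monic) (hq : q.Monic)
    (hcop : Nat.Coprime p.natDegree q.natDegree)
    (ha : 2 ≤ a.natDegree) (hap : a ∣ p) (haq : a ∣ q) :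
    ∀ α : K, a.eval α = 0 → (charPoly p q).eval α = 0 :=
  roots_of_common_divisor_are_roots_of_charPoly_general p q a hp hq ha hap haq
end
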